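/- Let P(h) be a regular fine zonotopal tiling of Z(V) induced by a generic height function h, and let x ∈ ℝ^d be a point not lying on the affine span of any internal facet's points. Orient each edge of the adjacency graph G of P(h) (tiles as vertices, shared internal facets as edges) from Π_{I,B} to Π_{I',B'} if, for the facet normal N with ⟨N, (x,1)⟩ > 0, one has ⟨N, z' − z⟩ > 0 for z ∈ Π_{I,B}, z' ∈ Π_{I',B'}. Then the resulting directed graph (G, o_x) is acyclic. -/

import Mathlib

open Finset

/-- The parallelepiped tile `Π_{I,B} = ∑_{i∈I} v_i + ∑_{b∈B} [0, v_b]`. -/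
def tileSet {n : ℕ} {E : Type*} [AddCommGroup E] [Module ℝ E]
    (v : Fin n → E) (I B : Finset (Fin n)) : Set E :=
  {z | ∃ α : Fin n → ℝ, (∀ b ∈ B, α b ∈ Set.Icc (0 : ℝ) 1) ∧
    z = (∑ i ∈ I, v i) + ∑ b ∈ B, α b • v b}

/-- A fine zonotopal tiling of the zonotope `Z(V) = ∑_{i=1}^n [0, v_i]`: a collection of
parallelepiped tiles `Π_{I,B}` with `I ∩ B = ∅`, `|B| = d+1`, `{v_b}_{b∈B}` linearly
independent, covering `Z(V)` and with pairwise disjoint interiors. -/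
structure IsFineZonotopalTiling {n : ℕ} {E : Type*} [AddCommGroup E] [Module ℝ E]
    [TopologicalSpace E] (d : ℕ) (v : Fin n → E)
    (P : Finset (Finset (Fin n) × Finset (Fin n))) : Prop where
  disj : ∀ p ∈ P, Disjoint p.1 p.2
  cardB : ∀ p ∈ P, p.2.card = d + 1
  indep : ∀ p ∈ P, LinearIndependent ℝ (fun b : p.2 => v ↑b)
  cover : (⋃ p ∈ P, tileSet v p.1 p.2) = tileSet v ∅ Finset.univ
  intdisj : ∀ p ∈ P, ∀ q ∈ P, p ≠ q →
    interior (tileSet v p.1 p.2) ∩ interior (tileSet v q.1 q.2) = ∅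

/-- The oriented adjacency relation on the tiles of a fine zonotopal tiling of the
lifted configuration: `p → q` iff `p` and `q` are distinct tiles of `P` sharing a facet
(i.e. `B \ {b} = B' \ {b'}` with the corresponding relation between `I` and `I'`), and
the facet normal `N` whose pairing with the lift `(x,1)` is positive points from `p`
to `q`. -/
def stepRel {n d : ℕ} (a : Fin n → (Fin d → ℝ))
    (P : Finset (Finset (Fin n) × Finset (Fin n))) (x : Fin d → ℝ)
    (p q : Finset (Fin n) × Finset (Fin n)) : Prop :=
  p ∈ P ∧ q ∈ P ∧ p ≠ q ∧
  ∃ b ∈ p.2, ∃ b' ∈ q.2, p.2.erase b = q.2.erase b' ∧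
    (p.1 = q.1 ∨ p.1 = insert b' q.1 ∨ q.1 = insert b p.1 ∨
      insert b p.1 = insert b' q.1) ∧
    ∃ N : Fin (d + 1) → ℝ, N ≠ 0 ∧
      (∀ c ∈ p.2.erase b, ∑ j, N j * (Fin.snoc (a c) 1 : Fin (d + 1) → ℝ) j = 0) ∧
      0 < ∑ j, N j * (Fin.snoc x 1 : Fin (d + 1) → ℝ) j ∧
      ∀ z ∈ tileSet (fun i => (Fin.snoc (a i) 1 : Fin (d + 1) → ℝ)) p.1 p.2,
        ∀ z' ∈ tileSet (fun i => (Fin.snoc (a i) 1 : Fin (d + 1) → ℝ)) q.1 q.2,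
          0 ≤ ∑ j, N j * (z' j - z j)

/-!
Regularity gives every tile `p` a functional `g_p` on `ℝ^{d+1}` with `⟨g_p, v_b⟩ = -h(a_b)` on
its generators, strictly larger on `I` and strictly smaller elsewhere. Across a shared facet
from `p` to `q`, `g_q - g_p` vanishes on the facet, hence is a multiple `μ N` of the facet normal;
comparing both sides on a pair of tile points that differ by `±v_b` shows `μ > 0`. So the
potential `p ↦ ⟨g_p, (x,1)⟩` strictly increases along every oriented edge, and there is no cycle.
-/

open Matrix

section Tiles

variable {n : ℕ} {E : Type*} [AddCommGroup E] [Module ℝ E]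

theorem sum_add_sum_mem_tileSet (V : Fin n → E) {I B C : Finset (Fin n)} (hC : C ⊆ B) :
    ∑ i ∈ I, V i + ∑ i ∈ C, V i ∈ tileSet V I B := by
  refine ⟨fun i => if i ∈ C then 1 else 0, fun b _ => by dsimp only; split_ifs <;> simp, ?_⟩
  simp only [ite_smul, one_smul, zero_smul, sum_ite_mem, inter_eq_right.mpr hC]

theorem exists_mem_tileSet_sub_eq (V : Fin n → E) {I B I' B' : Finset (Fin n)} {b b' : Fin n}
    (hb : b ∈ B) (hb' : b' ∈ B') (hbI : b ∉ I) (hb'I' : b' ∉ I') (hbb' : b ≠ b')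
    (hII' : I = I' ∨ I = insert b' I' ∨ I' = insert b I ∨ insert b I = insert b' I') :
    ∃ z ∈ tileSet V I B, ∃ z' ∈ tileSet V I' B', z' - z = if b ∈ I' then V b else -V b := by
  have hbB : {b} ⊆ B := singleton_subset_iff.mpr hb
  have hb'B' : {b'} ⊆ B' := singleton_subset_iff.mpr hb'
  rcases hII' with rfl | rfl | rfl | hII'
  · refine ⟨_, sum_add_sum_mem_tileSet V hbB, _, sum_add_sum_mem_tileSet V (empty_subset B'), ?_⟩
    simp [hbI]
  · have hbI' : b ∉ I' := fun h => hbI (mem_insert_of_mem h)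
    refine ⟨_, sum_add_sum_mem_tileSet V hbB, _, sum_add_sum_mem_tileSet V hb'B', ?_⟩
    simp only [hbI', if_false, sum_insert hb'I', sum_singleton]
    abel
  · refine ⟨_, sum_add_sum_mem_tileSet V (empty_subset B), _,
      sum_add_sum_mem_tileSet V (empty_subset B'), ?_⟩
    simp [sum_insert hbI]
  · have hbI' : b ∈ I' := by
      have := hII' ▸ mem_insert_self b I
      exact (mem_insert.mp this).resolve_left hbb'
    have hsum : V b + ∑ i ∈ I, V i = V b' + ∑ i ∈ I', V i := by
      rw [← sum_insert hbI, ← sum_insert hb'I', hII']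
    refine ⟨_, sum_add_sum_mem_tileSet V (empty_subset B), _,
      sum_add_sum_mem_tileSet V hb'B', ?_⟩
    simp only [hbI', if_true, sum_empty, add_zero, sum_singleton]
    rw [add_comm, ← hsum]
    abel

end Tiles

section DotProduct

variable {ι m K : Type*} [Fintype m]

theorem eq_zero_of_dotProduct_eq_zero_of_span_eq_top [CommSemiring K] {v : ι → m → K}
    (hv : Submodule.span K (Set.range v) = ⊤) {w : m → K} (hw : ∀ i, w ⬝ᵥ v i = 0) :
    w = 0 := by
  refine dotProduct_eq_zero w fun e => ?_
  have he : e ∈ Submodule.span K (Set.range v) := hv ▸ Submodule.mem_top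
  induction he using Submodule.span_induction with
  | mem _ hv => obtain ⟨i, rfl⟩ := hv; exact hw i
  | zero => exact dotProduct_zero w
  | add _ _ _ _ h₁ h₂ => rw [dotProduct_add, h₁, h₂, add_zero]
  | smul c _ _ h => rw [dotProduct_smul, h, smul_zero]

theorem exists_eq_smul_of_dotProduct_eq_zero [Field K] [DecidableEq ι] {v : ι → m → K}
    {B : Finset ι} (hB : Submodule.span K (Set.range fun c : B => v c) = ⊤) {b : ι} (hb : b ∈ B)
    {N u : m → K} (hN : N ≠ 0) (hNB : ∀ c ∈ B.erase b, N ⬝ᵥ v c = 0)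
    (huB : ∀ c ∈ B.erase b, u ⬝ᵥ v c = 0) : ∃ μ : K, u = μ • N := by
  have hNb : N ⬝ᵥ v b ≠ 0 := fun hNb => hN <|
    eq_zero_of_dotProduct_eq_zero_of_span_eq_top hB fun ⟨c, hc⟩ => by
      rcases eq_or_ne c b with rfl | hcb
      · exact hNb
      · exact hNB c (mem_erase.mpr ⟨hcb, hc⟩)
  refine ⟨u ⬝ᵥ v b / N ⬝ᵥ v b, sub_eq_zero.mp <|
    eq_zero_of_dotProduct_eq_zero_of_span_eq_top hB fun ⟨c, hc⟩ => ?_⟩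
  rw [sub_dotProduct, smul_dotProduct, smul_eq_mul]
  rcases eq_or_ne c b with rfl | hcb
  · rw [div_mul_cancel₀ _ hNb, sub_self]
  · have hc' := mem_erase.mpr ⟨hcb, hc⟩
    rw [huB c hc', hNB c hc', mul_zero, sub_zero]

end DotProduct

def IsTileFunctional {ι m : Type*} [Fintype m] (V : ι → m → ℝ) (h : ι → ℝ) (I B : Finset ι)
    (g : m → ℝ) : Prop :=
  ∀ i, (i ∈ I → -h i < g ⬝ᵥ V i) ∧ (i ∈ B → g ⬝ᵥ V i = -h i) ∧
    (i ∉ I → i ∉ B → g ⬝ᵥ V i < -h i)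

namespace IsTileFunctional

variable {ι m : Type*} [Fintype m] {V : ι → m → ℝ} {h : ι → ℝ} {I B I' B' : Finset ι}
  {g g' : m → ℝ}

theorem sub_dotProduct_eq_zero (hg : IsTileFunctional V h I B g)
    (hg' : IsTileFunctional V h I' B' g') {c : ι} (hc : c ∈ B) (hc' : c ∈ B') :
    (g' - g) ⬝ᵥ V c = 0 := by
  rw [sub_dotProduct, (hg c).2.1 hc, (hg' c).2.1 hc', sub_self]

theorem sub_dotProduct_pos [DecidableEq ι] (hg : IsTileFunctional V h I B g)
    (hg' : IsTileFunctional V h I' B' g') {b : ι} (hb : b ∈ B) (hb' : b ∉ B') :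
    0 < (g' - g) ⬝ᵥ (if b ∈ I' then V b else -V b) := by
  have hgb := (hg b).2.1 hb
  split_ifs with hbI'
  · have := (hg' b).1 hbI'
    rw [sub_dotProduct]
    linarith
  · have := (hg' b).2.2 hbI' hb'
    rw [dotProduct_neg, sub_dotProduct]
    linarith

end IsTileFunctional

theorem dotProduct_snoc_snoc {R : Type*} [CommSemiring R] {d : ℕ} (y : Fin (d + 2) → R)
    (w : Fin d → R) (t s : R) :
    y ⬝ᵥ Fin.snoc (Fin.snoc w t) s =
      (Fin.snoc (fun k : Fin d => y k.castSucc.castSucc) (y (Fin.last (d + 1))) : Fin (d + 1) → R)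
        ⬝ᵥ Fin.snoc w s + y (Fin.last d).castSucc * t := by
  simp only [dotProduct, Fin.sum_univ_castSucc, Fin.snoc_castSucc, Fin.snoc_last]
  ring

/-- The functional is `y` dehomogenised: drop its height coordinate and divide by it. -/
theorem exists_isTileFunctional_of_regular {n d : ℕ} {a : Fin n → Fin d → ℝ} {h : Fin n → ℝ}
    {I B : Finset (Fin n)} {y : Fin (d + 2) → ℝ} (hy0 : 0 < y (Fin.last d).castSucc)
    (hy : ∀ i : Fin n,
      (i ∈ I → 0 < y ⬝ᵥ Fin.snoc (Fin.snoc (a i) (h i)) 1) ∧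
      (i ∈ B → y ⬝ᵥ Fin.snoc (Fin.snoc (a i) (h i)) 1 = 0) ∧
      (i ∉ I ∪ B → y ⬝ᵥ Fin.snoc (Fin.snoc (a i) (h i)) 1 < 0)) :
    ∃ g, IsTileFunctional (fun i => (Fin.snoc (a i) 1 : Fin (d + 1) → ℝ)) h I B g := by
  set g : Fin (d + 1) → ℝ := (y (Fin.last d).castSucc)⁻¹ •
    Fin.snoc (fun k : Fin d => y k.castSucc.castSucc) (y (Fin.last (d + 1)))
  have hlift : ∀ i, y ⬝ᵥ Fin.snoc (Fin.snoc (a i) (h i)) 1 =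
      y (Fin.last d).castSucc * (g ⬝ᵥ Fin.snoc (a i) 1 + h i) := by
    intro i
    rw [dotProduct_snoc_snoc, smul_dotProduct, smul_eq_mul, mul_add, mul_inv_cancel_left₀ hy0.ne']
  refine ⟨g, fun i => ⟨fun hi => ?_, fun hi => ?_, fun hi hi' => ?_⟩⟩
  · have := pos_of_mul_pos_right (hlift i ▸ (hy i).1 hi) hy0.le
    linarith
  · have := (mul_eq_zero.mp (hlift i ▸ (hy i).2.1 hi)).resolve_left hy0.ne'
    linarith
  · have := neg_of_mul_neg_right (hlift i ▸ (hy i).2.2 (by simp [hi, hi'])) hy0.le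
    linarith

theorem ne_of_erase_eq_erase {n : ℕ} {p q : Finset (Fin n) × Finset (Fin n)} {b b' : Fin n}
    (hb : b ∈ p.2) (hb' : b' ∈ q.2) (hbp : b ∉ p.1) (hb'q : b' ∉ q.1) (hpq : p ≠ q)
    (hBB : p.2.erase b = q.2.erase b')
    (hII : p.1 = q.1 ∨ p.1 = insert b' q.1 ∨ q.1 = insert b p.1 ∨
      insert b p.1 = insert b' q.1) : b ≠ b' := by
  rintro rfl
  have hB : p.2 = q.2 := by rw [← insert_erase hb, hBB, insert_erase hb']
  rcases hII with hI | hI | hI | hI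
  · exact hpq (Prod.ext hI hB)
  · exact hbp (hI ▸ mem_insert_self b q.1)
  · exact hb'q (hI ▸ mem_insert_self b p.1)
  · exact hpq (Prod.ext (by rw [← erase_insert hbp, hI, erase_insert hb'q]) hB)

theorem stepRel.dotProduct_lt {n d : ℕ} {a : Fin n → Fin d → ℝ} {h : Fin n → ℝ}
    {P : Finset (Finset (Fin n) × Finset (Fin n))} {x : Fin d → ℝ}
    {g : Finset (Fin n) × Finset (Fin n) → Fin (d + 1) → ℝ}
    (hP : IsFineZonotopalTiling d (fun i => (Fin.snoc (a i) 1 : Fin (d + 1) → ℝ)) P)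
    (hg : ∀ p ∈ P,
      IsTileFunctional (fun i => (Fin.snoc (a i) 1 : Fin (d + 1) → ℝ)) h p.1 p.2 (g p))
    {p q : Finset (Fin n) × Finset (Fin n)} (hpq : stepRel a P x p q) :
    g p ⬝ᵥ Fin.snoc x 1 < g q ⬝ᵥ Fin.snoc x 1 := by
  obtain ⟨hp, hq, hne, b, hb, b', hb', hBB, hII, N, hN0, hNB, hNx, hNz⟩ := hpq
  have hbp : b ∉ p.1 := disjoint_right.mp (hP.disj p hp) hb
  have hb'q : b' ∉ q.1 := disjoint_right.mp (hP.disj q hq) hb'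
  have hbb' := ne_of_erase_eq_erase hb hb' hbp hb'q hne hBB hII
  have hbq : b ∉ q.2 := fun hbq => notMem_erase b p.2 (hBB ▸ mem_erase.mpr ⟨hbb', hbq⟩)
  have hspan : Submodule.span ℝ (Set.range fun c : p.2 => (Fin.snoc (a c) 1 : Fin (d + 1) → ℝ))
      = ⊤ :=
    (hP.indep p hp).span_eq_top_of_card_eq_finrank' (by simp [hP.cardB p hp])
  obtain ⟨μ, hμ⟩ := exists_eq_smul_of_dotProduct_eq_zero (v := fun i => Fin.snoc (a i) 1)
    hspan hb hN0 hNB fun c hc =>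
    (hg p hp).sub_dotProduct_eq_zero (hg q hq) (mem_of_mem_erase hc)
      (mem_of_mem_erase (hBB ▸ hc))
  obtain ⟨z, hz, z', hz', hzz'⟩ := exists_mem_tileSet_sub_eq
    (fun i => (Fin.snoc (a i) 1 : Fin (d + 1) → ℝ)) hb hb' hbp hb'q hbb' hII
  have hpos : 0 < μ * N ⬝ᵥ (z' - z) := by
    rw [← smul_eq_mul, ← smul_dotProduct, ← hμ, hzz']
    exact (hg p hp).sub_dotProduct_pos (hg q hq) hb hbq
  have hμ0 : 0 < μ := pos_of_mul_pos_left hpos (hNz z hz z' hz')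
  have hgx : 0 < (g q - g p) ⬝ᵥ Fin.snoc x 1 := by
    rw [hμ, smul_dotProduct, smul_eq_mul]
    exact mul_pos hμ0 hNx
  rwa [sub_dotProduct, sub_pos] at hgx

/-- **Acyclicity of the oriented adjacency graph** for a regular fine zonotopal tiling
`P(h)` induced by a generic height function `h`: for every generic point `x` (not lying
on the affine span of any internal facet's points), the orientation `o_x` of the
adjacency graph of `P(h)` induced by `x` admits no directed cycle. -/
theorem regular_tiling_graph_acyclic (n d : ℕ) (a : Fin n → (Fin d → ℝ))
    (h : Fin n → ℝ)
    (P : Finset (Finset (Fin n) × Finset (Fin n)))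
    (hP : IsFineZonotopalTiling d (fun i => (Fin.snoc (a i) 1 : Fin (d + 1) → ℝ)) P)
    (hreg : ∀ p ∈ P, ∃ y : Fin (d + 2) → ℝ, 0 < y ⟨d, by omega⟩ ∧
      ∀ i : Fin n,
        (i ∈ p.1 →
          0 < ∑ j, y j * (Fin.snoc (Fin.snoc (a i) (h i)) 1 : Fin (d + 2) → ℝ) j) ∧
        (i ∈ p.2 →
          ∑ j, y j * (Fin.snoc (Fin.snoc (a i) (h i)) 1 : Fin (d + 2) → ℝ) j = 0) ∧
        (i ∉ p.1 ∪ p.2 →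
          ∑ j, y j * (Fin.snoc (Fin.snoc (a i) (h i)) 1 : Fin (d + 2) → ℝ) j < 0))
    (x : Fin d → ℝ) :
    ∀ p, ¬ Relation.TransGen (stepRel a P x) p p := by
  choose! y hy0 hy using hreg
  choose! g hg using fun p hp => exists_isTileFunctional_of_regular (hy0 p hp) (hy p hp)
  intro p hcycle
  have hlt := Relation.TransGen.lift (fun p => g p ⬝ᵥ Fin.snoc x 1)
    (fun _ _ hpq => hpq.dotProduct_lt hP hg) p p hcycle
  rw [Relation.transGen_eq_self] at hlt
  exact lt_irrefl _ hlt
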